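/- arXiv:1110.4999 — 2 statements merged into one kernel-verified Lean document; each statement's English description precedes it below -/
import Mathlib

section
/- (Theorem 1, algebraic core.) With the correlation-aware quantization level q* := 2·s, the noisy-network-coding rate is within ½·log₂ 3 of the cut-set bound: min{ R_UB1, R_UB2 } − min{ R1(q*), R2(q*) } < ½·log₂(3). -/
/-!
Since `2 h_SD h_RD ≤ h_SD² + h_RD²`, the coherent-combining gain inside `R_UB1` is less than a
factor `2` over `1 + h_SD² + h_RD²`, so `R_UB1 - R1(q) < ½ + ½·log₂(1 + s/q)`. In the second
cut the quantization term only enlarges the argument of the first logarithm, so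
`R_UB2 - R2(q) < ½·log₂(1 + q/s)`. At `q = 2s` both bounds equal `½·log₂ 3`, and a difference of
minima is bounded by the larger of the termwise differences.
-/

open Real

theorem min_sub_min_le_max {α : Type*} [AddCommGroup α] [LinearOrder α] [IsOrderedAddMonoid α]
    (a b c d : α) : min a b - min c d ≤ max (a - c) (b - d) := by
  rcases le_total c d with h | h
  · rw [min_eq_left h]
    exact (sub_le_sub_right (min_le_left a b) c).trans (le_max_left _ _)
  · rw [min_eq_right h]
    exact (sub_le_sub_right (min_le_right a b) d).trans (le_max_right _ _)

theorem sq_add_sq_sub_two_mul_mul_nonneg {a c ρ : ℝ} (hρ : ρ ^ 2 ≤ 1) :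
    0 ≤ a ^ 2 + c ^ 2 - 2 * ρ * a * c := by
  -- `a² + c² - 2ρac = (a - ρc)² + (1 - ρ²)c²`
  nlinarith [sq_nonneg (a - ρ * c), mul_nonneg (sub_nonneg.2 hρ) (sq_nonneg c)]

theorem logb_two_one_add_sq_add_sq_add_two_mul_lt (a b : ℝ) :
    logb 2 (1 + a ^ 2 + b ^ 2 + 2 * a * b) < 1 + logb 2 (1 + a ^ 2 + b ^ 2) := by
  have hdouble : logb 2 (2 * (1 + a ^ 2 + b ^ 2)) = 1 + logb 2 (1 + a ^ 2 + b ^ 2) := by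
    rw [logb_mul two_ne_zero (by positivity), logb_self_eq_one one_lt_two]
  rw [← hdouble]
  have hpos : 0 < 1 + a ^ 2 + b ^ 2 + 2 * a * b := by nlinarith [sq_nonneg (a + b)]
  exact logb_lt_logb one_lt_two hpos (by nlinarith [sq_nonneg (a - b)])

noncomputable section Rates

variable (hSD hRD hSR ρ q : ℝ)

/- `cutSetBoundMAC`, `cutSetBoundBC`, `nncRateMAC`, `nncRateBC` are `R_UB1`, `R_UB2`, `R1(q)`,
`R2(q)`, with `ρ` for `ρ_z`. -/

def cutSetBoundMAC : ℝ := 1 / 2 * logb 2 (1 + hSD ^ 2 + hRD ^ 2 + 2 * hSD * hRD)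

def cutSetBoundBC : ℝ :=
  1 / 2 * logb 2 (1 + (hSD ^ 2 + hSR ^ 2 - 2 * ρ * hSD * hSR) / (1 - ρ ^ 2))

def nncRateMAC : ℝ :=
  1 / 2 * logb 2 (1 + hSD ^ 2 + hRD ^ 2) - 1 / 2 * logb 2 (1 + (1 - ρ ^ 2) / q)

def nncRateBC : ℝ :=
  1 / 2 * logb 2 (1 + (q + (q + 1) * hSD ^ 2 + hSR ^ 2 - 2 * ρ * hSD * hSR) / (1 - ρ ^ 2))
    - 1 / 2 * logb 2 (1 + q / (1 - ρ ^ 2))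

theorem cutSetBoundMAC_sub_nncRateMAC_lt :
    cutSetBoundMAC hSD hRD - nncRateMAC hSD hRD ρ q
      < 1 / 2 + 1 / 2 * logb 2 (1 + (1 - ρ ^ 2) / q) := by
  have := logb_two_one_add_sq_add_sq_add_two_mul_lt hSD hRD
  unfold cutSetBoundMAC nncRateMAC
  linarith

theorem cutSetBoundBC_sub_nncRateBC_lt (hs : 0 < 1 - ρ ^ 2) (hq : 0 < q) :
    cutSetBoundBC hSD hSR ρ - nncRateBC hSD hSR ρ q < 1 / 2 * logb 2 (1 + q / (1 - ρ ^ 2)) := by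
  have hB : 0 ≤ hSD ^ 2 + hSR ^ 2 - 2 * ρ * hSD * hSR :=
    sq_add_sq_sub_two_mul_mul_nonneg (by linarith)
  have hlt : logb 2 (1 + (hSD ^ 2 + hSR ^ 2 - 2 * ρ * hSD * hSR) / (1 - ρ ^ 2))
      < logb 2 (1 + (q + (q + 1) * hSD ^ 2 + hSR ^ 2 - 2 * ρ * hSD * hSR) / (1 - ρ ^ 2)) := by
    have hpos : 0 < 1 + (hSD ^ 2 + hSR ^ 2 - 2 * ρ * hSD * hSR) / (1 - ρ ^ 2) := by positivity
    refine logb_lt_logb one_lt_two hpos ?_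
    gcongr
    nlinarith [sq_nonneg hSD]
  unfold cutSetBoundBC nncRateBC
  linarith

end Rates

theorem nnc_within_half_log_three_general
    (hSD hRD hSR ρz : ℝ)
    (hρz_lb : -1 < ρz) (hρz_ub : ρz < 1) :
    min (1/2 * Real.logb 2 (1 + hSD^2 + hRD^2 + 2*hSD*hRD))
        (1/2 * Real.logb 2 (1 + (hSD^2 + hSR^2 - 2*ρz*hSD*hSR) / (1 - ρz^2)))
      - min (1/2 * Real.logb 2 (1 + hSD^2 + hRD^2)
              - 1/2 * Real.logb 2 (1 + (1 - ρz^2) / (2 * (1 - ρz^2))))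
            (1/2 * Real.logb 2
                (1 + (2 * (1 - ρz^2) + (2 * (1 - ρz^2) + 1)*hSD^2 + hSR^2
                      - 2*ρz*hSD*hSR) / (1 - ρz^2))
              - 1/2 * Real.logb 2 (1 + 2 * (1 - ρz^2) / (1 - ρz^2)))
      < 1/2 * Real.logb 2 3 := by
  change min (cutSetBoundMAC hSD hRD) (cutSetBoundBC hSD hSR ρz)
      - min (nncRateMAC hSD hRD ρz (2 * (1 - ρz ^ 2))) (nncRateBC hSD hSR ρz (2 * (1 - ρz ^ 2)))
      < 1 / 2 * logb 2 3
  set s := 1 - ρz ^ 2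
  have hs : 0 < s := by nlinarith
  have hMAC := cutSetBoundMAC_sub_nncRateMAC_lt hSD hRD ρz (2 * s)
  have hBC := cutSetBoundBC_sub_nncRateBC_lt hSD hSR ρz (2 * s) hs (by positivity)
  have hthreeHalves : 1 + s / (2 * s) = 3 / 2 := by field_simp; ring
  have hthree : 1 + 2 * s / s = 3 := by field_simp; ring
  rw [hthreeHalves, logb_div three_ne_zero two_ne_zero, logb_self_eq_one one_lt_two] at hMAC
  rw [hthree] at hBC
  refine (min_sub_min_le_max _ _ _ _).trans_lt (max_lt ?_ ?_)
  · linarith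
  · exact hBC

/-- Theorem 1, algebraic core: With the correlation-aware
quantization level `q* = 2·s` (where `s = 1 - ρz²`), the noisy-network-coding
rate is within `½·log₂ 3` of the cut-set bound:
`min{R_UB1, R_UB2} - min{R1(q*), R2(q*)} < ½·log₂ 3`. -/
theorem nnc_within_half_log_three
    (hSD hRD hSR ρz : ℝ)
    (hSD_nn : 0 ≤ hSD) (hRD_nn : 0 ≤ hRD) (hSR_nn : 0 ≤ hSR)
    (hρz_lb : -1 < ρz) (hρz_ub : ρz < 1) :
    min (1/2 * Real.logb 2 (1 + hSD^2 + hRD^2 + 2*hSD*hRD))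
        (1/2 * Real.logb 2 (1 + (hSD^2 + hSR^2 - 2*ρz*hSD*hSR) / (1 - ρz^2)))
      - min (1/2 * Real.logb 2 (1 + hSD^2 + hRD^2)
              - 1/2 * Real.logb 2 (1 + (1 - ρz^2) / (2 * (1 - ρz^2))))
            (1/2 * Real.logb 2
                (1 + (2 * (1 - ρz^2) + (2 * (1 - ρz^2) + 1)*hSD^2 + hSR^2
                      - 2*ρz*hSD*hSR) / (1 - ρz^2))
              - 1/2 * Real.logb 2 (1 + 2 * (1 - ρz^2) / (1 - ρz^2)))
      < 1/2 * Real.logb 2 3 :=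
  nnc_within_half_log_three_general hSD hRD hSR ρz hρz_lb hρz_ub
end

section
/- The single-tap amplify-and-forward gap to the cut-set bound is unbounded when the noises are fully correlated: for every M > 0 there exist channel gains h_SD, h_SR, h_RD > 0 with h_SD ≠ h_SR and h_RD² > 1 + h_SR² such that, with α := 1/√(1 + h_SR²), ½·log₂(1 + (h_SD + h_RD)²) − (1/(4π))·∫₀^{2π} log₂( 1 + |H(ω)|²/N(ω) ) dω > M. -/
/-!
Fix `h_SD` and `h_SR` and let `h_RD → ∞`. Writing `x = α·h_RD`, the noise spectrum satisfies
`N(ω) ≥ (x - 1)² ≥ x²/4` once `x ≥ 2`, while `|H(ω)|² ≤ x²·(h_SD + h_SR)²`, so the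
amplify-and-forward rate stays below `½·log₂(1 + 4(h_SD + h_SR)²)`. The cut-set bound grows like
`log₂ h_RD`, hence so does the gap.
-/

open Real Filter

noncomputable section

def relayGain (hSR : ℝ) : ℝ := 1 / √(1 + hSR ^ 2)

def noisePSD (α hRD ω : ℝ) : ℝ := 1 + α ^ 2 * hRD ^ 2 + 2 * α * hRD * cos ω

def channelGainSq (α hSD hSR hRD ω : ℝ) : ℝ :=
  hSD ^ 2 + α ^ 2 * hRD ^ 2 * hSR ^ 2 + 2 * α * hSD * hRD * hSR * cos ω

def cutSetBound (hSD hRD : ℝ) : ℝ := 1 / 2 * logb 2 (1 + (hSD + hRD) ^ 2)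

def afRate (hSD hSR hRD : ℝ) : ℝ :=
  1 / (4 * π) * ∫ ω in (0 : ℝ)..(2 * π),
    logb 2 (1 + channelGainSq (relayGain hSR) hSD hSR hRD ω / noisePSD (relayGain hSR) hRD ω)

end

lemma sq_half_le_noisePSD {α hRD : ℝ} (h : 2 ≤ α * hRD) (ω : ℝ) :
    (α * hRD / 2) ^ 2 ≤ noisePSD α hRD ω := by
  have hcos := neg_one_le_cos ω
  unfold noisePSD
  nlinarith

lemma noisePSD_pos {α hRD : ℝ} (h : 2 ≤ α * hRD) (ω : ℝ) : 0 < noisePSD α hRD ω :=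
  lt_of_lt_of_le (by positivity) (sq_half_le_noisePSD h ω)

lemma channelGainSq_nonneg (α hSD hSR hRD ω : ℝ) : 0 ≤ channelGainSq α hSD hSR hRD ω := by
  have hsin : 0 ≤ 1 - cos ω ^ 2 := sub_nonneg.2 (cos_sq_le_one ω)
  have hsq : channelGainSq α hSD hSR hRD ω
      = (α * hRD * hSR + hSD * cos ω) ^ 2 + hSD ^ 2 * (1 - cos ω ^ 2) := by
    unfold channelGainSq; ring
  rw [hsq]
  positivity

lemma channelGainSq_le {α hSD hSR hRD : ℝ} (hSD0 : 0 ≤ hSD) (hSR0 : 0 ≤ hSR)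
    (h : 1 ≤ α * hRD) (ω : ℝ) :
    channelGainSq α hSD hSR hRD ω ≤ (α * hRD) ^ 2 * (hSD + hSR) ^ 2 := by
  have hcos := cos_le_one ω
  have hcross : 0 ≤ α * hRD * hSD * hSR := mul_nonneg (mul_nonneg (by linarith) hSD0) hSR0
  calc channelGainSq α hSD hSR hRD ω ≤ (hSD + α * hRD * hSR) ^ 2 := by
        unfold channelGainSq; nlinarith
    _ ≤ (α * hRD * hSD + α * hRD * hSR) ^ 2 := by gcongr; nlinarith
    _ = (α * hRD) ^ 2 * (hSD + hSR) ^ 2 := by ring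

lemma channelGainSq_div_noisePSD_le {α hSD hSR hRD : ℝ} (hSD0 : 0 ≤ hSD) (hSR0 : 0 ≤ hSR)
    (h : 2 ≤ α * hRD) (ω : ℝ) :
    channelGainSq α hSD hSR hRD ω / noisePSD α hRD ω ≤ 4 * (hSD + hSR) ^ 2 := by
  rw [div_le_iff₀ (noisePSD_pos h ω)]
  calc channelGainSq α hSD hSR hRD ω ≤ (α * hRD) ^ 2 * (hSD + hSR) ^ 2 :=
        channelGainSq_le hSD0 hSR0 (by linarith) ω
    _ = 4 * (hSD + hSR) ^ 2 * (α * hRD / 2) ^ 2 := by ring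
    _ ≤ 4 * (hSD + hSR) ^ 2 * noisePSD α hRD ω := by
        gcongr; exact sq_half_le_noisePSD h ω

/-- No integrability is needed: a non-integrable `f` has integral `0`. -/
lemma intervalIntegral_le_of_nonneg_of_le {f : ℝ → ℝ} {a b C : ℝ} (hab : a ≤ b)
    (h0 : ∀ x ∈ Set.Ioc a b, 0 ≤ f x) (hC : ∀ x ∈ Set.Ioc a b, f x ≤ C) :
    ∫ x in a..b, f x ≤ C * (b - a) := by
  have hnorm := intervalIntegral.norm_integral_le_of_norm_le_const (C := C) (f := f)
    fun x hx => by
      rw [Set.uIoc_of_le hab] at hx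
      rw [Real.norm_eq_abs, abs_of_nonneg (h0 x hx)]; exact hC x hx
  rw [abs_of_nonneg (sub_nonneg.mpr hab)] at hnorm
  exact (le_abs_self _).trans hnorm

lemma afRate_le {hSD hSR hRD : ℝ} (hSD0 : 0 ≤ hSD) (hSR0 : 0 ≤ hSR)
    (h : 2 ≤ relayGain hSR * hRD) :
    afRate hSD hSR hRD ≤ 1 / 2 * logb 2 (1 + 4 * (hSD + hSR) ^ 2) := by
  set α := relayGain hSR
  have hint : ∫ ω in (0 : ℝ)..(2 * π),
      logb 2 (1 + channelGainSq α hSD hSR hRD ω / noisePSD α hRD ω)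
        ≤ logb 2 (1 + 4 * (hSD + hSR) ^ 2) * (2 * π - 0) := by
    have hsnr_nonneg : ∀ ω, 0 ≤ channelGainSq α hSD hSR hRD ω / noisePSD α hRD ω := fun ω =>
      div_nonneg (channelGainSq_nonneg _ _ _ _ _) (noisePSD_pos h ω).le
    exact intervalIntegral_le_of_nonneg_of_le (by positivity)
      (fun ω _ => logb_nonneg one_lt_two (by linarith [hsnr_nonneg ω]))
      (fun ω _ => logb_le_logb_of_le one_lt_two (by linarith [hsnr_nonneg ω])
        (by linarith [channelGainSq_div_noisePSD_le hSD0 hSR0 h ω]))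
  calc afRate hSD hSR hRD
      ≤ 1 / (4 * π) * (logb 2 (1 + 4 * (hSD + hSR) ^ 2) * (2 * π - 0)) := by
        unfold afRate; gcongr
    _ = 1 / 2 * logb 2 (1 + 4 * (hSD + hSR) ^ 2) := by field_simp; ring

lemma tendsto_cutSetBound_atTop (hSD : ℝ) : Tendsto (cutSetBound hSD) atTop atTop := by
  have hpoly : Tendsto (fun hRD : ℝ => 1 + (hSD + hRD) ^ 2) atTop atTop :=
    tendsto_atTop_add_const_left _ _
      ((tendsto_pow_atTop two_ne_zero).comp (tendsto_atTop_add_const_left _ _ tendsto_id))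
  exact ((tendsto_logb_atTop one_lt_two).comp hpoly).const_mul_atTop one_half_pos

lemma tendsto_cutSetBound_sub_afRate_atTop {hSD hSR : ℝ} (hSD0 : 0 ≤ hSD) (hSR0 : 0 ≤ hSR) :
    Tendsto (fun hRD => cutSetBound hSD hRD - afRate hSD hSR hRD) atTop atTop := by
  have hα : 0 < relayGain hSR := by unfold relayGain; positivity
  refine tendsto_atTop_mono' _ ?_ (tendsto_atTop_add_const_right _
    (-(1 / 2 * logb 2 (1 + 4 * (hSD + hSR) ^ 2))) (tendsto_cutSetBound_atTop hSD))
  filter_upwards [eventually_ge_atTop (2 / relayGain hSR)] with hRD hRD_ge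
  have h : 2 ≤ relayGain hSR * hRD := by
    rw [div_le_iff₀ hα] at hRD_ge; linarith
  linarith [afRate_le hSD0 hSR0 h]

open Real in
theorem af_gap_unbounded_general (M : ℝ) :
    ∃ hSD hSR hRD : ℝ, 0 < hSD ∧ 0 < hSR ∧ 0 < hRD ∧
      hSD ≠ hSR ∧ 1 + hSR^2 < hRD^2 ∧
      (1/2 * Real.logb 2 (1 + (hSD + hRD)^2))
        - (1 / (4 * π)) * (∫ ω in (0:ℝ)..(2 * π),
            Real.logb 2
              (1 + (hSD^2 + (1 / Real.sqrt (1 + hSR^2))^2*hRD^2*hSR^2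
                      + 2*(1 / Real.sqrt (1 + hSR^2))*hSD*hRD*hSR*Real.cos ω)
                / (1 + (1 / Real.sqrt (1 + hSR^2))^2*hRD^2
                      + 2*(1 / Real.sqrt (1 + hSR^2))*hRD*Real.cos ω)))
        > M := by
  obtain ⟨hRD, hgap, hRD3⟩ :=
    (((tendsto_cutSetBound_sub_afRate_atTop zero_le_one zero_le_two).eventually_gt_atTop M).and
      (eventually_gt_atTop 3)).exists
  -- `hgap` closes the last conjunct by unfolding `cutSetBound` and `afRate`.
  exact ⟨1, 2, hRD, one_pos, two_pos, by linarith, by norm_num, by nlinarith, hgap⟩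

open Real in
/-- The single-tap amplify-and-forward gap to the cut-set bound
(at noise correlation `ρz = 1`) is unbounded: for every `M > 0` there exist
gains `h_SD, h_SR, h_RD > 0` with `h_SD ≠ h_SR` and `h_RD² > 1 + h_SR²` such
that, with `α = 1/√(1 + h_SR²)`,
`½·log₂(1 + (h_SD + h_RD)²) - (1/(4π))·∫₀^{2π} log₂(1 + |H(ω)|²/N(ω)) dω > M`. -/
theorem af_gap_unbounded (M : ℝ) (hM : 0 < M) :
    ∃ hSD hSR hRD : ℝ, 0 < hSD ∧ 0 < hSR ∧ 0 < hRD ∧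
      hSD ≠ hSR ∧ 1 + hSR^2 < hRD^2 ∧
      (1/2 * Real.logb 2 (1 + (hSD + hRD)^2))
        - (1 / (4 * π)) * (∫ ω in (0:ℝ)..(2 * π),
            Real.logb 2
              (1 + (hSD^2 + (1 / Real.sqrt (1 + hSR^2))^2*hRD^2*hSR^2
                      + 2*(1 / Real.sqrt (1 + hSR^2))*hSD*hRD*hSR*Real.cos ω)
                / (1 + (1 / Real.sqrt (1 + hSR^2))^2*hRD^2
                      + 2*(1 / Real.sqrt (1 + hSR^2))*hRD*Real.cos ω)))
        > M :=
  af_gap_unbounded_general M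
end
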